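/- arXiv:1807.00767 — 2 statements merged into one kernel-verified Lean document; each statement's English description precedes it below -/
import Mathlib

section
/- Let $G_0 = 1$ and let $G_n$ be the size of generation $n$ in a Galton--Watson process with offspring distribution $\xi$. If $\|\xi\|_k := (E\xi^k)^{1/k} < \infty$ for some $k \ge 1$, then $\|G_n\|_k \le \|\xi\|_k^n$ for every $n \ge 0$. -/
open MeasureTheory ProbabilityTheory Finset
open scoped ENNReal NNReal

/-- Minkowski inequality for finite sums of `ℝ≥0∞`-valued functions. -/
lemma gw_lp_sum_le {Ω : Type*} [MeasureSpace Ω] {k : ℝ} (hk : 1 ≤ k) {ι : Type*}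
    (s : Finset ι) (f : ι → Ω → ℝ≥0∞) (hf : ∀ i, Measurable (f i)) :
    (∫⁻ ω, (∑ i ∈ s, f i ω) ^ k ∂ℙ) ^ (1 / k)
      ≤ ∑ i ∈ s, (∫⁻ ω, (f i ω) ^ k ∂ℙ) ^ (1 / k) := by
  have hk0 : (0 : ℝ) < k := lt_of_lt_of_le one_pos hk
  induction s using Finset.cons_induction with
  | empty =>
      have h1 : (0 : ℝ≥0∞) ^ k = 0 := ENNReal.zero_rpow_of_pos hk0
      have h2 : (0 : ℝ≥0∞) ^ (1/k) = 0 := ENNReal.zero_rpow_of_pos (by positivity)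
      simp only [Finset.sum_empty, h1, lintegral_zero, h2, Finset.sum_empty, le_refl]
  | cons a s ha ih =>
      simp only [Finset.sum_cons]
      calc (∫⁻ ω, (f a ω + ∑ i ∈ s, f i ω) ^ k ∂ℙ) ^ (1 / k)
          ≤ (∫⁻ ω, (f a ω) ^ k ∂ℙ) ^ (1 / k)
            + (∫⁻ ω, (∑ i ∈ s, f i ω) ^ k ∂ℙ) ^ (1 / k) :=
            ENNReal.lintegral_Lp_add_le (hf a).aemeasurable
              (Finset.measurable_sum s fun i _ => hf i).aemeasurable hk
        _ ≤ _ := by gcongr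

/-- Galton–Watson generation sizes: `G 0 = 1`, `G (n+1) = ∑_{i < G n} ξ n i`, where the
offspring counts `ξ n i` are i.i.d. copies of `ξ₀`, and the family `(ξ n i)_i` is independent
of `G n`.  If `‖ξ₀‖_k < ∞` for some `k ≥ 1`, then `‖G n‖_k ≤ ‖ξ₀‖_k ^ n`. -/
theorem galton_watson_generation_Lk_bound
    {Ω : Type*} [MeasureSpace Ω] [IsProbabilityMeasure (ℙ : Measure Ω)]
    (k : ℝ) (hk : 1 ≤ k) (ξ₀ : Ω → ℕ) (ξ : ℕ → ℕ → Ω → ℕ) (G : ℕ → Ω → ℕ)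
    (hmeas : ∀ n i, Measurable (ξ n i)) (hGmeas : ∀ n, Measurable (G n))
    (hident : ∀ n i, IdentDistrib (ξ n i) ξ₀ ℙ ℙ)
    (hindep : ∀ n, iIndepFun (ξ n) ℙ)
    (hGindep : ∀ n, Indep (MeasurableSpace.comap (G n) inferInstance)
      (⨆ i, MeasurableSpace.comap (ξ n i) inferInstance) ℙ)
    (hG0 : ∀ ω, G 0 ω = 1)
    (hGrec : ∀ n ω, G (n + 1) ω = ∑ i ∈ range (G n ω), ξ n i ω)
    (hξk : Integrable (fun ω => (ξ₀ ω : ℝ) ^ k) ℙ) :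
    ∀ n, (∫ ω, (G n ω : ℝ) ^ k ∂ℙ) ^ (1 / k)
      ≤ ((∫ ω, (ξ₀ ω : ℝ) ^ k ∂ℙ) ^ (1 / k)) ^ n := by
  have hk0 : (0 : ℝ) < k := lt_of_lt_of_le one_pos hk
  have hkne : k ≠ 0 := ne_of_gt hk0
  -- ℝ≥0∞-valued moments
  set I : ℝ≥0∞ := ∫⁻ ω, ((ξ₀ ω : ℝ≥0∞)) ^ k ∂ℙ with hI
  set L : ℕ → ℝ≥0∞ := fun n => ∫⁻ ω, ((G n ω : ℝ≥0∞)) ^ k ∂ℙ with hLdef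
  -- measurability helpers
  have hmeasξ : ∀ n i, Measurable fun ω => ((ξ n i ω : ℝ≥0∞)) :=
    fun n i => measurable_from_top.comp (hmeas n i)
  have hmeasG : ∀ n, Measurable fun ω => ((G n ω : ℝ≥0∞)) :=
    fun n => measurable_from_top.comp (hGmeas n)
  -- Step A: moment bound for a fixed number of summands
  have stepA : ∀ n m, (∫⁻ ω, (∑ i ∈ range m, ((ξ n i ω : ℝ≥0∞))) ^ k ∂ℙ)
      ≤ (m : ℝ≥0∞) ^ k * I := by
    intro n m
    have h1 : (∫⁻ ω, (∑ i ∈ range m, ((ξ n i ω : ℝ≥0∞))) ^ k ∂ℙ) ^ (1 / k)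
        ≤ (m : ℝ≥0∞) * I ^ (1 / k) := by
      calc (∫⁻ ω, (∑ i ∈ range m, ((ξ n i ω : ℝ≥0∞))) ^ k ∂ℙ) ^ (1 / k)
          ≤ ∑ i ∈ range m, (∫⁻ ω, ((ξ n i ω : ℝ≥0∞)) ^ k ∂ℙ) ^ (1 / k) :=
            gw_lp_sum_le hk _ _ (fun i => hmeasξ n i)
        _ = ∑ i ∈ range m, I ^ (1 / k) := by
            refine Finset.sum_congr rfl fun i _ => ?_
            have : (∫⁻ ω, ((ξ n i ω : ℝ≥0∞)) ^ k ∂ℙ) = I := by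
              exact ((hident n i).comp
                (measurable_from_top.pow_const k)).lintegral_eq
            rw [this]
        _ = (m : ℝ≥0∞) * I ^ (1 / k) := by
            simp [Finset.sum_const, nsmul_eq_mul]
    have h2 := ENNReal.rpow_le_rpow h1 (le_of_lt hk0)
    have e1 : ((∫⁻ ω, (∑ i ∈ range m, ((ξ n i ω : ℝ≥0∞))) ^ k ∂ℙ) ^ (1 / k)) ^ k
        = ∫⁻ ω, (∑ i ∈ range m, ((ξ n i ω : ℝ≥0∞))) ^ k ∂ℙ := by
      rw [← ENNReal.rpow_mul, one_div, inv_mul_cancel₀ hkne, ENNReal.rpow_one]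
    have e2 : (((m : ℝ≥0∞)) * I ^ (1 / k)) ^ k = (m : ℝ≥0∞) ^ k * I := by
      rw [ENNReal.mul_rpow_of_nonneg _ _ (le_of_lt hk0), ← ENNReal.rpow_mul, one_div,
        inv_mul_cancel₀ hkne, ENNReal.rpow_one]
    rwa [e1, e2] at h2
  -- the partition sets
  have hA : ∀ n m, MeasurableSet (G n ⁻¹' {m}) :=
    fun n m => hGmeas n (measurableSet_singleton m)
  have hdisj : ∀ n, Pairwise (Function.onFun Disjoint fun m => G n ⁻¹' {m}) := by
    intro n m m' hmm'
    exact Set.disjoint_left.2 fun ω h1 h2 => hmm' (h1.symm.trans h2)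
  have hcover : ∀ n, (⋃ m, G n ⁻¹' {m}) = Set.univ :=
    fun n => Set.eq_univ_of_forall fun ω => Set.mem_iUnion.2 ⟨G n ω, rfl⟩
  have hpart : ∀ n (f : Ω → ℝ≥0∞),
      ∫⁻ ω, f ω ∂ℙ = ∑' m : ℕ, ∫⁻ ω in G n ⁻¹' {m}, f ω ∂ℙ := by
    intro n f
    rw [← setLIntegral_univ, ← hcover n, lintegral_iUnion (hA n) (hdisj n)]
  -- independence step: ∫_{G n = m} g = ℙ(G n = m) * ∫ g for g measurable wrt the ξ n i
  have hindepInt : ∀ n m,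
      ∫⁻ ω in G n ⁻¹' {m}, (∑ i ∈ range m, ((ξ n i ω : ℝ≥0∞))) ^ k ∂ℙ
        = ℙ (G n ⁻¹' {m}) * ∫⁻ ω, (∑ i ∈ range m, ((ξ n i ω : ℝ≥0∞))) ^ k ∂ℙ := by
    intro n m
    set Mf := MeasurableSpace.comap (G n) inferInstance with hMf
    set Mg := ⨆ i, MeasurableSpace.comap (ξ n i) inferInstance with hMg
    set g : Ω → ℝ≥0∞ := fun ω => (∑ i ∈ range m, ((ξ n i ω : ℝ≥0∞))) ^ k with hg
    set f : Ω → ℝ≥0∞ := (G n ⁻¹' {m}).indicator 1 with hf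
    have hMfle : Mf ≤ MeasureSpace.toMeasurableSpace := (hGmeas n).comap_le
    have hMgle : Mg ≤ MeasureSpace.toMeasurableSpace :=
      iSup_le fun i => (hmeas n i).comap_le
    have hAmMf : MeasurableSet[Mf] (G n ⁻¹' {m}) :=
      ⟨{m}, measurableSet_singleton m, rfl⟩
    have hfm : Measurable[Mf] f := by
      rw [hf]
      exact Measurable.indicator (m := Mf) (@measurable_one ℝ≥0∞ Ω _ Mf _) hAmMf
    have hξMg : ∀ i, Measurable[Mg] (ξ n i) := by
      intro i
      have h1 : Measurable[MeasurableSpace.comap (ξ n i) inferInstance] (ξ n i) :=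
        Measurable.of_comap_le le_rfl
      exact h1.mono (le_iSup (fun i => MeasurableSpace.comap (ξ n i) inferInstance) i) le_rfl
    have hgm : Measurable[Mg] g := by
      rw [hg]
      refine Measurable.pow_const ?_ k
      exact Finset.measurable_sum _ fun i _ => measurable_from_top.comp (hξMg i)
    have key := lintegral_mul_eq_lintegral_mul_lintegral_of_independent_measurableSpace
      hMfle hMgle (hGindep n) hfm hgm
    have hfg : ∀ ω, f ω * g ω = (G n ⁻¹' {m}).indicator g ω := by
      intro ω
      by_cases h : ω ∈ G n ⁻¹' {m} <;> simp [hf, Set.indicator_apply, h]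
    calc ∫⁻ ω in G n ⁻¹' {m}, g ω ∂ℙ
        = ∫⁻ ω, (G n ⁻¹' {m}).indicator g ω ∂ℙ := (lintegral_indicator (hA n m) g).symm
      _ = ∫⁻ ω, f ω * g ω ∂ℙ := by simp_rw [hfg]
      _ = (∫⁻ ω, f ω ∂ℙ) * ∫⁻ ω, g ω ∂ℙ := key
      _ = ℙ (G n ⁻¹' {m}) * ∫⁻ ω, g ω ∂ℙ := by rw [hf, lintegral_indicator_one (hA n m)]
  -- L n as a sum over the partition
  have hLsum : ∀ n, L n = ∑' m : ℕ, (m : ℝ≥0∞) ^ k * ℙ (G n ⁻¹' {m}) := by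
    intro n
    rw [hLdef]
    simp only
    rw [hpart n]
    refine tsum_congr fun m => ?_
    rw [setLIntegral_congr_fun (hA n m)
      (fun ω hω => by rw [show G n ω = m from hω]),
      setLIntegral_const]
  -- recursion: L (n+1) ≤ L n * I
  have hrec : ∀ n, L (n + 1) ≤ L n * I := by
    intro n
    have h1 : L (n + 1) = ∑' m : ℕ,
        ∫⁻ ω in G n ⁻¹' {m}, (∑ i ∈ range m, ((ξ n i ω : ℝ≥0∞))) ^ k ∂ℙ := by
      rw [hLdef]; simp only
      rw [hpart n]
      refine tsum_congr fun m => ?_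
      refine setLIntegral_congr_fun (hA n m)
        (fun ω hω => ?_)
      have : G n ω = m := Set.mem_preimage.1 hω
      rw [hGrec n ω, this, Nat.cast_sum]
    calc L (n + 1) = ∑' m : ℕ,
          ∫⁻ ω in G n ⁻¹' {m}, (∑ i ∈ range m, ((ξ n i ω : ℝ≥0∞))) ^ k ∂ℙ := h1
      _ ≤ ∑' m : ℕ, ℙ (G n ⁻¹' {m}) * ((m : ℝ≥0∞) ^ k * I) := by
          refine ENNReal.tsum_le_tsum fun m => ?_
          rw [hindepInt n m]
          exact mul_le_mul_right (stepA n m) _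
      _ = (∑' m : ℕ, (m : ℝ≥0∞) ^ k * ℙ (G n ⁻¹' {m})) * I := by
          rw [← ENNReal.tsum_mul_right]
          exact tsum_congr fun m => by ring
      _ = L n * I := by rw [hLsum n]
  -- L 0 = 1
  have hL0 : L 0 = 1 := by
    simp only [hLdef, hG0, Nat.cast_one, ENNReal.one_rpow, lintegral_one, measure_univ]
  -- L n ≤ I ^ n
  have hLn : ∀ n, L n ≤ I ^ n := by
    intro n
    induction n with
    | zero => simp [hL0]
    | succ n ih =>
        calc L (n + 1) ≤ L n * I := hrec n
          _ ≤ I ^ n * I := mul_le_mul_left ih I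
          _ = I ^ (n + 1) := (pow_succ I n).symm
  -- conversion to real integrals
  have hnnξ : 0 ≤ᵐ[ℙ] fun ω => (ξ₀ ω : ℝ) ^ k :=
    Filter.Eventually.of_forall fun ω => Real.rpow_nonneg (Nat.cast_nonneg _) k
  have hofReal : ∀ (f : Ω → ℕ) (ω : Ω),
      ENNReal.ofReal ((f ω : ℝ) ^ k) = ((f ω : ℝ≥0∞)) ^ k := by
    intro f ω
    rw [← ENNReal.ofReal_rpow_of_nonneg (Nat.cast_nonneg _) (le_of_lt hk0),
      ENNReal.ofReal_natCast]
  have hIeq : I = ENNReal.ofReal (∫ ω, (ξ₀ ω : ℝ) ^ k ∂ℙ) := by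
    rw [ofReal_integral_eq_lintegral_ofReal hξk hnnξ, hI]
    exact lintegral_congr fun ω => (hofReal ξ₀ ω).symm
  have hInetop : I ≠ ⊤ := by rw [hIeq]; exact ENNReal.ofReal_ne_top
  have hintnn : (0:ℝ) ≤ ∫ ω, (ξ₀ ω : ℝ) ^ k ∂ℙ :=
    integral_nonneg fun ω => Real.rpow_nonneg (Nat.cast_nonneg _) k
  intro n
  have hGint : ∫ ω, (G n ω : ℝ) ^ k ∂ℙ = (L n).toReal := by
    rw [integral_eq_lintegral_of_nonneg_ae
      (Filter.Eventually.of_forall fun ω => Real.rpow_nonneg (Nat.cast_nonneg _) k)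
      ((((measurable_from_top.comp (hGmeas n) : Measurable fun ω => ((G n ω : ℝ)))).pow_const
        k).aestronglyMeasurable), hLdef]
    congr 1
    exact lintegral_congr fun ω => hofReal (G n) ω
  have hmain : ∫ ω, (G n ω : ℝ) ^ k ∂ℙ ≤ (∫ ω, (ξ₀ ω : ℝ) ^ k ∂ℙ) ^ n := by
    rw [hGint]
    calc (L n).toReal ≤ (I ^ n).toReal :=
          ENNReal.toReal_mono (by simp [hInetop, ENNReal.pow_ne_top]) (hLn n)
      _ = (∫ ω, (ξ₀ ω : ℝ) ^ k ∂ℙ) ^ n := by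
          rw [ENNReal.toReal_pow, hIeq, ENNReal.toReal_ofReal hintnn]
  have hGnn : (0:ℝ) ≤ ∫ ω, (G n ω : ℝ) ^ k ∂ℙ :=
    integral_nonneg fun ω => Real.rpow_nonneg (Nat.cast_nonneg _) k
  calc (∫ ω, (G n ω : ℝ) ^ k ∂ℙ) ^ (1 / k)
      ≤ ((∫ ω, (ξ₀ ω : ℝ) ^ k ∂ℙ) ^ n) ^ (1 / k) :=
        Real.rpow_le_rpow hGnn hmain (by positivity)
    _ = ((∫ ω, (ξ₀ ω : ℝ) ^ k ∂ℙ) ^ (1 / k)) ^ n := by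
        rw [← Real.rpow_natCast _ n, ← Real.rpow_mul hintnn, mul_comm,
          Real.rpow_mul hintnn, Real.rpow_natCast]
end

section
/- Let $\zeta = \sum_{n=0}^\infty G_n$ be the total progeny of a Galton--Watson process with offspring distribution $\xi$ satisfying $\|\xi\|_k < 1$ for some $k \ge 1$. Then $\|\zeta\|_k \le 1/(1 - \|\xi\|_k) < \infty$. -/
open MeasureTheory ProbabilityTheory Finset ENNReal

/-- Finite Minkowski inequality in `ℝ≥0∞` lintegral form. -/
lemma lintegral_Lp_finset_sum_le {Ω : Type*} [MeasurableSpace Ω] (μ : Measure Ω)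
    {ι : Type*} (s : Finset ι) (f : ι → Ω → ℝ≥0∞) (hf : ∀ i, Measurable (f i))
    {k : ℝ} (hk : 1 ≤ k) :
    (∫⁻ ω, (∑ i ∈ s, f i ω) ^ k ∂μ) ^ (1 / k)
      ≤ ∑ i ∈ s, (∫⁻ ω, f i ω ^ k ∂μ) ^ (1 / k) := by
  classical
  induction s using Finset.induction_on with
  | empty =>
      simp only [Finset.sum_empty]
      rw [ENNReal.zero_rpow_of_pos (lt_of_lt_of_le one_pos hk), lintegral_zero,
        ENNReal.zero_rpow_of_pos (by positivity)]
  | insert a s' hx ih =>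
      simp only [Finset.sum_insert hx]
      calc (∫⁻ ω, (f a ω + ∑ i ∈ s', f i ω) ^ k ∂μ) ^ (1 / k)
          ≤ (∫⁻ ω, f a ω ^ k ∂μ) ^ (1 / k)
            + (∫⁻ ω, (∑ i ∈ s', f i ω) ^ k ∂μ) ^ (1 / k) := by
            exact ENNReal.lintegral_Lp_add_le (hf a).aemeasurable
              (Finset.measurable_sum s' (fun i _ => hf i)).aemeasurable hk
        _ ≤ _ := add_le_add_right ih _

/-- Total progeny of a Galton–Watson process: if the offspring distribution `ξ₀` satisfies
`‖ξ₀‖_k < 1` for some `k ≥ 1`, then the total progeny `ζ = ∑ₙ G n` satisfies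
`‖ζ‖_k ≤ 1 / (1 - ‖ξ₀‖_k) < ∞`.  (Norms are taken in `ℝ≥0∞`.) -/
theorem galton_watson_total_progeny_Lk_bound
    {Ω : Type*} [MeasureSpace Ω] [IsProbabilityMeasure (ℙ : Measure Ω)]
    (k : ℝ) (hk : 1 ≤ k) (ξ₀ : Ω → ℕ) (ξ : ℕ → ℕ → Ω → ℕ) (G : ℕ → Ω → ℕ)
    (hmeas : ∀ n i, Measurable (ξ n i)) (hGmeas : ∀ n, Measurable (G n))
    (hident : ∀ n i, IdentDistrib (ξ n i) ξ₀ ℙ ℙ)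
    (hindep : ∀ n, iIndepFun (ξ n) ℙ)
    (hGindep : ∀ n, Indep (MeasurableSpace.comap (G n) inferInstance)
      (⨆ i, MeasurableSpace.comap (ξ n i) inferInstance) ℙ)
    (hG0 : ∀ ω, G 0 ω = 1)
    (hGrec : ∀ n ω, G (n + 1) ω = ∑ i ∈ range (G n ω), ξ n i ω)
    (hξk : (∫⁻ ω, (ξ₀ ω : ℝ≥0∞) ^ k ∂ℙ) ^ (1 / k) < 1) :
    (∫⁻ ω, (∑' n, (G n ω : ℝ≥0∞)) ^ k ∂ℙ) ^ (1 / k)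
      ≤ 1 / (1 - (∫⁻ ω, (ξ₀ ω : ℝ≥0∞) ^ k ∂ℙ) ^ (1 / k)) ∧
    1 / (1 - (∫⁻ ω, (ξ₀ ω : ℝ≥0∞) ^ k ∂ℙ) ^ (1 / k)) < ⊤ := by
  have hk0 : (0:ℝ) < k := lt_of_lt_of_le one_pos hk
  have hk0' : (0:ℝ) ≤ k := hk0.le
  have hkne : k ≠ 0 := hk0.ne'
  set r : ℝ≥0∞ := (∫⁻ ω, (ξ₀ ω : ℝ≥0∞) ^ k ∂ℙ) ^ (1 / k) with hr
  -- cancellation lemmas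
  have cancel1 : ∀ x : ℝ≥0∞, (x ^ (1/k)) ^ k = x := by
    intro x
    rw [← ENNReal.rpow_mul, one_div, inv_mul_cancel₀ hkne, ENNReal.rpow_one]
  have cancel2 : ∀ x : ℝ≥0∞, (x ^ k) ^ (1/k) = x := by
    intro x
    rw [← ENNReal.rpow_mul, one_div, mul_inv_cancel₀ hkne, ENNReal.rpow_one]
  have castMeas : ∀ (f : Ω → ℕ), Measurable f → Measurable fun ω => ((f ω : ℝ≥0∞)) :=
    fun f hf => measurable_from_nat.comp hf
  -- identical distribution: same k-th moment
  have hmoment : ∀ n i, (∫⁻ ω, ((ξ n i ω : ℝ≥0∞)) ^ k ∂ℙ) = ∫⁻ ω, (ξ₀ ω : ℝ≥0∞) ^ k ∂ℙ := by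
    intro n i
    exact ((hident n i).comp (u := fun m : ℕ => ((m : ℝ≥0∞)) ^ k)
      measurable_from_nat).lintegral_eq
  -- expansion of the k-th moment of an ℕ-valued random variable
  have expand : ∀ (X : Ω → ℕ), Measurable X →
      (∫⁻ ω, ((X ω : ℝ≥0∞)) ^ k ∂ℙ) = ∑' m : ℕ, ℙ (X ⁻¹' {m}) * (m : ℝ≥0∞) ^ k := by
    intro X hX
    have hpt : ∀ ω, ((X ω : ℝ≥0∞)) ^ k
        = ∑' m : ℕ, (X ⁻¹' {m}).indicator (fun _ => (m : ℝ≥0∞) ^ k) ω := by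
      intro ω
      rw [tsum_eq_single (X ω)]
      · rw [Set.indicator_of_mem (by simp [Set.mem_preimage])]
      · intro m hm
        rw [Set.indicator_of_notMem]
        simp [Set.mem_preimage, Ne.symm hm]
    simp_rw [hpt]
    rw [lintegral_tsum (fun m => ((measurable_const.indicator
      (hX (measurableSet_singleton m))).aemeasurable))]
    congr 1
    ext m
    rw [lintegral_indicator_const (hX (measurableSet_singleton m)), mul_comm]
  -- the key moment bound for each generation
  have key : ∀ n, (∫⁻ ω, ((G n ω : ℝ≥0∞)) ^ k ∂ℙ) ≤ (r ^ n) ^ k := by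
    intro n
    induction n with
    | zero =>
        simp only [hG0, pow_zero, ENNReal.one_rpow, Nat.cast_one]
        simp [measure_univ]
    | succ n ih =>
        -- pointwise decomposition over the value of G n
        set g : ℕ → Ω → ℝ≥0∞ := fun m ω => ((∑ i ∈ range m, ξ n i ω : ℕ) : ℝ≥0∞) ^ k with hg
        have hgmeas : ∀ m, Measurable (g m) := by
          intro m
          exact (castMeas _ (Finset.measurable_sum (range m) (fun i _ => hmeas n i))).pow_const k
        have hA : ∀ m : ℕ, MeasurableSet (G n ⁻¹' {m}) :=
          fun m => hGmeas n (measurableSet_singleton m)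
        have hpt : ∀ ω, ((G (n+1) ω : ℝ≥0∞)) ^ k
            = ∑' m : ℕ, (G n ⁻¹' {m}).indicator (g m) ω := by
          intro ω
          rw [tsum_eq_single (G n ω)]
          · rw [Set.indicator_of_mem (by simp [Set.mem_preimage]), hg]
            simp [hGrec n ω]
          · intro m hm
            rw [Set.indicator_of_notMem]
            simp [Set.mem_preimage, Ne.symm hm]
        -- g m is measurable w.r.t. the sup of the comaps
        have hgmeas' : ∀ m, Measurable[⨆ i, MeasurableSpace.comap (ξ n i) inferInstance] (g m) := by
          intro m
          have : ∀ i, Measurable[⨆ i, MeasurableSpace.comap (ξ n i) inferInstance] (ξ n i) :=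
            fun i => Measurable.of_comap_le (le_iSup (fun i => MeasurableSpace.comap (ξ n i) inferInstance) i)
          have h2 : Measurable[⨆ i, MeasurableSpace.comap (ξ n i) inferInstance]
              fun ω => ∑ i ∈ range m, ((ξ n i ω : ℝ≥0∞)) :=
            Finset.measurable_sum (range m)
              (fun i _ => measurable_from_nat.comp (this i))
          have h3 : g m = fun ω => (∑ i ∈ range m, ((ξ n i ω : ℝ≥0∞))) ^ k := by
            funext ω; rw [hg]; simp [Nat.cast_sum]
          rw [h3]
          exact h2.pow_const k
        -- factorization via independence
        have hfact : ∀ m : ℕ, (∫⁻ ω, (G n ⁻¹' {m}).indicator (g m) ω ∂ℙ)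
            = ℙ (G n ⁻¹' {m}) * ∫⁻ ω, g m ω ∂ℙ := by
          intro m
          have h1 : ∀ ω, (G n ⁻¹' {m}).indicator (g m) ω
              = (G n ⁻¹' {m}).indicator (fun _ => (1:ℝ≥0∞)) ω * g m ω := by
            intro ω
            by_cases h : ω ∈ G n ⁻¹' {m}
            · simp [Set.indicator_of_mem h]
            · simp [Set.indicator_of_notMem h]
          simp_rw [h1]
          have hAm : MeasurableSet[MeasurableSpace.comap (G n) inferInstance] (G n ⁻¹' {m}) :=
            ⟨{m}, measurableSet_singleton m, rfl⟩
          rw [lintegral_mul_eq_lintegral_mul_lintegral_of_independent_measurableSpace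
            (measurable_iff_comap_le.1 (hGmeas n))
            (iSup_le fun i => measurable_iff_comap_le.1 (hmeas n i))
            (hGindep n)
            (measurable_const.indicator hAm) (hgmeas' m)]
          congr 1
          rw [lintegral_indicator_const (hA m), one_mul]
        -- bound on ∫ g m via Minkowski
        have hgm_bound : ∀ m : ℕ, (∫⁻ ω, g m ω ∂ℙ) ≤ ((m : ℝ≥0∞) * r) ^ k := by
          intro m
          have h1 : (∫⁻ ω, g m ω ∂ℙ) ^ (1/k) ≤ (m : ℝ≥0∞) * r := by
            have := lintegral_Lp_finset_sum_le (ℙ : Measure Ω) (range m)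
              (fun i ω => ((ξ n i ω : ℝ≥0∞))) (fun i => castMeas _ (hmeas n i)) hk
            have heq : ∀ ω, (∑ i ∈ range m, ((ξ n i ω : ℝ≥0∞)))
                = ((∑ i ∈ range m, ξ n i ω : ℕ) : ℝ≥0∞) := by
              intro ω; rw [Nat.cast_sum]
            calc (∫⁻ ω, g m ω ∂ℙ) ^ (1/k)
                ≤ ∑ i ∈ range m, (∫⁻ ω, ((ξ n i ω : ℝ≥0∞)) ^ k ∂ℙ) ^ (1/k) := by
                  refine le_trans (le_of_eq ?_) this
                  congr 1
                  refine lintegral_congr fun ω => ?_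
                  rw [hg, heq ω]
              _ = ∑ i ∈ range m, r := by
                  refine Finset.sum_congr rfl fun i _ => ?_
                  rw [hmoment n i]
              _ = (m : ℝ≥0∞) * r := by
                  rw [Finset.sum_const, card_range, nsmul_eq_mul]
          calc (∫⁻ ω, g m ω ∂ℙ) = ((∫⁻ ω, g m ω ∂ℙ) ^ (1/k)) ^ k := (cancel1 _).symm
            _ ≤ ((m : ℝ≥0∞) * r) ^ k := ENNReal.rpow_le_rpow h1 hk0'
        calc (∫⁻ ω, ((G (n+1) ω : ℝ≥0∞)) ^ k ∂ℙ)
            = ∑' m : ℕ, ∫⁻ ω, (G n ⁻¹' {m}).indicator (g m) ω ∂ℙ := by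
              simp_rw [hpt]
              exact lintegral_tsum fun m => ((hgmeas m).indicator (hA m)).aemeasurable
          _ = ∑' m : ℕ, ℙ (G n ⁻¹' {m}) * ∫⁻ ω, g m ω ∂ℙ := by
              exact tsum_congr fun m => hfact m
          _ ≤ ∑' m : ℕ, ℙ (G n ⁻¹' {m}) * (((m : ℝ≥0∞)) ^ k * r ^ k) := by
              refine ENNReal.tsum_le_tsum fun m => ?_
              refine mul_le_mul_right ?_ _
              calc (∫⁻ ω, g m ω ∂ℙ) ≤ ((m : ℝ≥0∞) * r) ^ k := hgm_bound m
                _ = ((m : ℝ≥0∞)) ^ k * r ^ k := ENNReal.mul_rpow_of_nonneg _ _ hk0'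
          _ = (∑' m : ℕ, ℙ (G n ⁻¹' {m}) * ((m : ℝ≥0∞)) ^ k) * r ^ k := by
              rw [← ENNReal.tsum_mul_right]
              exact tsum_congr fun m => by ring
          _ ≤ (r ^ n) ^ k * r ^ k := by
              refine mul_le_mul_left ?_ _
              rw [← expand (G n) (hGmeas n)]
              exact ih
          _ = (r ^ (n+1)) ^ k := by
              rw [pow_succ, ENNReal.mul_rpow_of_nonneg _ _ hk0']
  -- Lᵏ norm of each generation
  have keyN : ∀ n, (∫⁻ ω, ((G n ω : ℝ≥0∞)) ^ k ∂ℙ) ^ (1/k) ≤ r ^ n := by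
    intro n
    calc (∫⁻ ω, ((G n ω : ℝ≥0∞)) ^ k ∂ℙ) ^ (1/k)
        ≤ ((r ^ n) ^ k) ^ (1/k) := ENNReal.rpow_le_rpow (key n) (by positivity)
      _ = r ^ n := cancel2 _
  set C : ℝ≥0∞ := 1 / (1 - r) with hC
  -- partial sums bound
  have hS : ∀ N, (∫⁻ ω, (∑ n ∈ range N, ((G n ω : ℝ≥0∞))) ^ k ∂ℙ) ≤ C ^ k := by
    intro N
    have h1 : (∫⁻ ω, (∑ n ∈ range N, ((G n ω : ℝ≥0∞))) ^ k ∂ℙ) ^ (1/k) ≤ C := by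
      calc (∫⁻ ω, (∑ n ∈ range N, ((G n ω : ℝ≥0∞))) ^ k ∂ℙ) ^ (1/k)
          ≤ ∑ n ∈ range N, (∫⁻ ω, ((G n ω : ℝ≥0∞)) ^ k ∂ℙ) ^ (1/k) :=
            lintegral_Lp_finset_sum_le _ _ _ (fun n => castMeas _ (hGmeas n)) hk
        _ ≤ ∑ n ∈ range N, r ^ n := Finset.sum_le_sum fun n _ => keyN n
        _ ≤ ∑' n : ℕ, r ^ n := ENNReal.sum_le_tsum _
        _ = (1 - r)⁻¹ := ENNReal.tsum_geometric r
        _ = C := by rw [hC, one_div]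
    calc (∫⁻ ω, (∑ n ∈ range N, ((G n ω : ℝ≥0∞))) ^ k ∂ℙ)
        = ((∫⁻ ω, (∑ n ∈ range N, ((G n ω : ℝ≥0∞))) ^ k ∂ℙ) ^ (1/k)) ^ k := (cancel1 _).symm
      _ ≤ C ^ k := ENNReal.rpow_le_rpow h1 hk0'
  -- pointwise: (∑' n, G n)^k ≤ ⨆ N, (partial sum)^k
  have hpt : ∀ ω, (∑' n, ((G n ω : ℝ≥0∞))) ^ k
      ≤ ⨆ N : ℕ, (∑ n ∈ range N, ((G n ω : ℝ≥0∞))) ^ k := by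
    intro ω
    set y := ⨆ N : ℕ, (∑ n ∈ range N, ((G n ω : ℝ≥0∞))) ^ k with hy
    have h1 : (∑' n, ((G n ω : ℝ≥0∞))) ≤ y ^ (1/k) := by
      rw [ENNReal.tsum_eq_iSup_nat]
      refine iSup_le fun N => ?_
      calc (∑ n ∈ range N, ((G n ω : ℝ≥0∞)))
          = ((∑ n ∈ range N, ((G n ω : ℝ≥0∞))) ^ k) ^ (1/k) := (cancel2 _).symm
        _ ≤ y ^ (1/k) := ENNReal.rpow_le_rpow (le_iSup (fun N => (∑ n ∈ range N, ((G n ω : ℝ≥0∞))) ^ k) N) (by positivity)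
    calc (∑' n, ((G n ω : ℝ≥0∞))) ^ k ≤ (y ^ (1/k)) ^ k := ENNReal.rpow_le_rpow h1 hk0'
      _ = y := cancel1 _
  have hmain : (∫⁻ ω, (∑' n, ((G n ω : ℝ≥0∞))) ^ k ∂ℙ) ≤ C ^ k := by
    calc (∫⁻ ω, (∑' n, ((G n ω : ℝ≥0∞))) ^ k ∂ℙ)
        ≤ ∫⁻ ω, ⨆ N : ℕ, (∑ n ∈ range N, ((G n ω : ℝ≥0∞))) ^ k ∂ℙ :=
          lintegral_mono fun ω => hpt ω
      _ = ⨆ N : ℕ, ∫⁻ ω, (∑ n ∈ range N, ((G n ω : ℝ≥0∞))) ^ k ∂ℙ := by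
          refine lintegral_iSup (fun N => ?_) (fun N M hNM ω => ?_)
          · exact (Finset.measurable_sum (range N)
              (fun n _ => castMeas _ (hGmeas n))).pow_const k
          · exact ENNReal.rpow_le_rpow
              (Finset.sum_le_sum_of_subset (range_subset_range.2 hNM)) hk0'
      _ ≤ C ^ k := iSup_le hS
  constructor
  · calc (∫⁻ ω, (∑' n, ((G n ω : ℝ≥0∞))) ^ k ∂ℙ) ^ (1/k)
        ≤ (C ^ k) ^ (1/k) := ENNReal.rpow_le_rpow hmain (by positivity)
      _ = C := cancel2 _
  · rw [hC, one_div]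
    exact ENNReal.inv_lt_top.2 (tsub_pos_iff_lt.2 hξk)
end
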